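/- In the heterogeneous regret game with two groups — players 1, …, m regret averse with common coefficient κ > 0 and players m+1, …, N regret neutral with coefficient 0, where 1 ≤ m ≤ N−1 — the profile a* in which every regret averse player chooses safe and every regret neutral player chooses risky is a pure strategy Nash equilibrium if and only if v ≥ 1/p and v ≤ (1/p)·(1 + κ·(1 − p·(1 − q(N−m)))) / (1 + q(N−m)·κ). -/

import Mathlib

/-!
Being a Nash equilibrium is a best-response condition for each player separately. A regret
neutral player compares `p v` (risky) with `1` (safe), giving `v ≥ 1/p`. At `a*` exactly the
`N − m` neutral players choose risky, so a regret averse player learns the risky outcome with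
probability `q(N − m)`; her condition `p v − (1 − p) κ ≤ 1 − p q(N − m) κ (v − 1)` is linear in
`v`, and dividing by `p (1 + q(N − m) κ) > 0` gives the upper bound.
-/

namespace RegretGame

/-- An action in the regret game: choose the risky lottery or the safe lottery. -/
inductive Act : Type
  | risky : Act
  | safe : Act
deriving DecidableEq, Repr

/-- `numRisky a i` is the number of players other than `i` choosing the risky lottery
at the action profile `a`. -/
def numRisky {N : ℕ} (a : Fin N → Act) (i : Fin N) : ℕ :=
  (Finset.univ.filter (fun j => j ≠ i ∧ a j = Act.risky)).card

/-- Player `i`'s expected payoff in the heterogeneous regret game at action profile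
`a`, where player `i` has her own coefficient of regret aversion `κ i`. -/
noncomputable def payoffHet {N : ℕ} (p v : ℝ) (κ : Fin N → ℝ) (q : ℕ → ℝ)
    (a : Fin N → Act) (i : Fin N) : ℝ :=
  if a i = Act.risky then p * v - (1 - p) * κ i
  else 1 - p * q (numRisky a i) * κ i * (v - 1)

/-- A pure strategy Nash equilibrium of the heterogeneous regret game: no player can
strictly increase her expected payoff by unilaterally changing her own action. -/
def IsNashHet {N : ℕ} (p v : ℝ) (κ : Fin N → ℝ) (q : ℕ → ℝ) (a : Fin N → Act) : Prop :=
  ∀ (i : Fin N) (b : Act),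
    payoffHet p v κ q (Function.update a i b) i ≤ payoffHet p v κ q a i

section BestResponse

variable {N : ℕ} (p v : ℝ) (κ : Fin N → ℝ) (q : ℕ → ℝ)

theorem numRisky_update_self (a : Fin N → Act) (i : Fin N) (b : Act) :
    numRisky (Function.update a i b) i = numRisky a i := by
  unfold numRisky
  congr 1
  ext j
  by_cases h : j = i <;> simp [h]

theorem payoffHet_update_risky (a : Fin N → Act) (i : Fin N) :
    payoffHet p v κ q (Function.update a i Act.risky) i = p * v - (1 - p) * κ i := by
  simp [payoffHet]

theorem payoffHet_update_safe (a : Fin N → Act) (i : Fin N) :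
    payoffHet p v κ q (Function.update a i Act.safe) i =
      1 - p * q (numRisky a i) * κ i * (v - 1) := by
  simp [payoffHet, numRisky_update_self]

theorem isNashHet_iff (a : Fin N → Act) :
    IsNashHet p v κ q a ↔ ∀ i,
      (a i = Act.risky → 1 - p * q (numRisky a i) * κ i * (v - 1) ≤ p * v - (1 - p) * κ i) ∧
      (a i = Act.safe → p * v - (1 - p) * κ i ≤ 1 - p * q (numRisky a i) * κ i * (v - 1)) := by
  refine forall_congr' fun i => ?_
  have hboth : (∀ b, payoffHet p v κ q (Function.update a i b) i ≤ payoffHet p v κ q a i) ↔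
      payoffHet p v κ q (Function.update a i Act.risky) i ≤ payoffHet p v κ q a i ∧
      payoffHet p v κ q (Function.update a i Act.safe) i ≤ payoffHet p v κ q a i :=
    ⟨fun h => ⟨h _, h _⟩, fun h b => by cases b; exacts [h.1, h.2]⟩
  rw [hboth, payoffHet_update_risky, payoffHet_update_safe]
  cases hai : a i <;> simp [payoffHet, hai]

end BestResponse

theorem numRisky_twoGroup_of_lt {N m : ℕ} (hmN : m < N) {i : Fin N} (hi : (i : ℕ) < m) :
    numRisky (fun j : Fin N => if (j : ℕ) < m then Act.safe else Act.risky) i = N - m := by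
  have hfilter : Finset.univ.filter (fun j : Fin N =>
      j ≠ i ∧ (if (j : ℕ) < m then Act.safe else Act.risky) = Act.risky) =
      Finset.Ici (⟨m, hmN⟩ : Fin N) := by
    ext j
    simp only [Finset.mem_filter, Finset.mem_univ, true_and, Finset.mem_Ici, Fin.le_def]
    split_ifs with hj
    · simp [hj]
    · grind
  rw [numRisky, hfilter, Fin.card_Ici]

theorem risky_payoff_le_safe_payoff_iff {p v k Q : ℝ} (hp : 0 < p) (hden : 0 < 1 + Q * k) :
    p * v - (1 - p) * k ≤ 1 - p * Q * k * (v - 1) ↔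
      v ≤ (1 / p) * (1 + k * (1 - p * (1 - Q))) / (1 + Q * k) := by
  rw [le_div_iff₀ hden, one_div, inv_mul_eq_div, le_div_iff₀ hp]
  constructor <;> intro h <;> linarith

theorem regret_game_two_groups_mixed_profile_nash_iff_general
    (N m : ℕ) (hm1 : 1 ≤ m) (hmN : m ≤ N - 1)
    (p v : ℝ) (hp : 0 < p ∧ p < 1)
    (κ : ℝ) (hκ : 0 < κ)
    (q : ℕ → ℝ)
    (hq01 : ∀ m' ≤ N - 1, 0 ≤ q m' ∧ q m' ≤ 1) :
    IsNashHet p v (fun i : Fin N => if (i : ℕ) < m then κ else 0) q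
        (fun i : Fin N => if (i : ℕ) < m then Act.safe else Act.risky) ↔
      (v ≥ 1 / p ∧
        v ≤ (1 / p) * (1 + κ * (1 - p * (1 - q (N - m)))) / (1 + q (N - m) * κ)) := by
  obtain ⟨hp, -⟩ := hp
  have hmlt : m < N := by omega
  have hden : 0 < 1 + q (N - m) * κ := by
    have := (hq01 (N - m) (by omega)).1
    positivity
  rw [isNashHet_iff, ge_iff_le, div_le_iff₀' hp, ← risky_payoff_le_safe_payoff_iff hp hden]
  constructor
  · intro h
    refine ⟨by simpa using (h ⟨m, hmlt⟩).1, ?_⟩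
    let i₀ : Fin N := ⟨0, by omega⟩
    have hi₀ : (i₀ : ℕ) < m := hm1
    simpa [hi₀, numRisky_twoGroup_of_lt hmlt hi₀] using (h i₀).2
  · rintro ⟨hneutral, haverse⟩ i
    by_cases hi : (i : ℕ) < m
    · simpa [hi, numRisky_twoGroup_of_lt hmlt hi] using haverse
    · simpa [hi] using hneutral

/-- Two-group heterogeneous regret game: players `0, …, m−1` are regret averse with
common coefficient `κ > 0` and players `m, …, N−1` are regret neutral (coefficient
`0`), with `1 ≤ m ≤ N−1`. The profile `a*` in which every regret averse player
chooses safe and every regret neutral player chooses risky is a pure strategy Nash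
equilibrium if and only if
`v ≥ 1/p` and `v ≤ (1/p)·(1 + κ·(1 − p·(1 − q(N−m)))) / (1 + q(N−m)·κ)`. -/
theorem regret_game_two_groups_mixed_profile_nash_iff
    (N m : ℕ) (hN : 2 ≤ N) (hm1 : 1 ≤ m) (hmN : m ≤ N - 1)
    (p v : ℝ) (hp : 0 < p ∧ p < 1) (hv : 1 < v)
    (κ : ℝ) (hκ : 0 < κ)
    (q : ℕ → ℝ)
    (hq01 : ∀ m' ≤ N - 1, 0 ≤ q m' ∧ q m' ≤ 1)
    (hq0 : q 0 = 0) (hqN : q (N - 1) = 1)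
    (hqmono : ∀ m₁ m₂, m₁ < m₂ → m₂ ≤ N - 1 → q m₁ < q m₂) :
    IsNashHet p v (fun i : Fin N => if (i : ℕ) < m then κ else 0) q
        (fun i : Fin N => if (i : ℕ) < m then Act.safe else Act.risky) ↔
      (v ≥ 1 / p ∧
        v ≤ (1 / p) * (1 + κ * (1 - p * (1 - q (N - m)))) / (1 + q (N - m) * κ)) :=
  regret_game_two_groups_mixed_profile_nash_iff_general N m hm1 hmN p v hp κ hκ q hq01

end RegretGame
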